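/- Let f be a violation-free DMAC instance with unit displacements on G = G1 × G2, and let x, x̃ ∈ G1 with x ≤ x̃. If y* is the pointwise-least fixed point of the sub-instance f^x and ỹ* is the pointwise-least fixed point of f^{x̃}, then y* ≤ ỹ* and ‖ỹ* − y*‖∞ ≤ ‖x̃ − x‖∞. -/

import Mathlib

/-!
Fix the ℓ∞ slack `k = ‖x̃ − x‖∞`. Monotonicity in the first coordinate makes `ỹ*` a pre-fixed
point of `f^x`, and a least fixed point lies below every pre-fixed point (iterate the map down
from it; on a finite grid the decreasing orbit stabilises), so `y* ≤ ỹ*`. Non-expansiveness makes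
`w = min(ỹ*, y* + k)` a pre-fixed point of `f^x̃`, whence `ỹ* ≤ w ≤ y* + k`.
-/

/-- Membership in the grid `{1, …, n}^d ⊆ ℤ^d`. -/
def inGrid (n : ℕ) {d : ℕ} (x : Fin d → ℤ) : Prop :=
  ∀ i, 1 ≤ x i ∧ x i ≤ (n : ℤ)

/-- The ℓ∞ distance `‖x − y‖∞ = max_i |x_i − y_i|` (as a natural number). -/
def linf {d : ℕ} (x y : Fin d → ℤ) : ℕ :=
  Finset.univ.sup fun i => (x i - y i).natAbs

/-- Membership in the product grid `G1 × G2`. -/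
def inGridP (n : ℕ) {d1 d2 : ℕ} (u : (Fin d1 → ℤ) × (Fin d2 → ℤ)) : Prop :=
  inGrid n u.1 ∧ inGrid n u.2

/-- The ℓ∞ distance on the product grid. -/
def linfP {d1 d2 : ℕ} (u v : (Fin d1 → ℤ) × (Fin d2 → ℤ)) : ℕ :=
  max (linf u.1 v.1) (linf u.2 v.2)

section FixedPoint

variable {α : Type*} [PartialOrder α] {s : Set α} {g : α → α}

theorem exists_isFixedPt_le_of_map_le (hs : s.WellFoundedOn (· < ·)) (hmaps : Set.MapsTo g s s)
    (hmono : MonotoneOn g s) {w : α} (hw : w ∈ s) (hgw : g w ≤ w) :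
    ∃ z ∈ s, Function.IsFixedPt g z ∧ z ≤ w := by
  refine hs.induction hw (P := fun w => g w ≤ w → ∃ z ∈ s, g.IsFixedPt z ∧ z ≤ w) ?_ hgw
  intro w hw ih hgw
  rcases hgw.eq_or_lt with hfix | hlt
  · exact ⟨w, hw, hfix, le_rfl⟩
  · obtain ⟨z, hz, hzfix, hzle⟩ := ih (g w) (hmaps hw) hlt (hmono (hmaps hw) hw hgw)
    exact ⟨z, hz, hzfix, hzle.trans hgw⟩

theorem le_of_forall_isFixedPt_of_map_le (hs : s.WellFoundedOn (· < ·))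
    (hmaps : Set.MapsTo g s s) (hmono : MonotoneOn g s) {y w : α}
    (hleast : ∀ z ∈ s, g z = z → y ≤ z) (hw : w ∈ s) (hgw : g w ≤ w) : y ≤ w := by
  obtain ⟨z, hz, hzfix, hzw⟩ := exists_isFixedPt_le_of_map_le hs hmaps hmono hw hgw
  exact (hleast z hz hzfix).trans hzw

end FixedPoint

section Grid

variable {n d : ℕ}

theorem setOf_inGrid_finite : {x : Fin d → ℤ | inGrid n x}.Finite :=
  (Set.finite_Icc (fun _ => 1) fun _ => (n : ℤ)).subset fun _ hx =>
    ⟨fun i => (hx i).1, fun i => (hx i).2⟩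

theorem inGrid_of_le_of_le {x y z : Fin d → ℤ} (hx : inGrid n x) (hz : inGrid n z)
    (hxy : x ≤ y) (hyz : y ≤ z) : inGrid n y :=
  fun i => ⟨(hx i).1.trans (hxy i), (hyz i).trans (hz i).2⟩

theorem linf_le_iff {x y : Fin d → ℤ} {k : ℕ} : linf x y ≤ k ↔ ∀ i, |x i - y i| ≤ k := by
  simp only [linf, Finset.sup_le_iff, Finset.mem_univ, true_implies, Int.abs_eq_natAbs,
    Nat.cast_le]

theorem le_add_of_linf_le {x y : Fin d → ℤ} {k : ℕ} (h : linf x y ≤ k) : x ≤ y + k :=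
  fun i => by
    have := (abs_sub_le_iff.1 (linf_le_iff.1 h i)).1
    simp only [Pi.add_apply, Pi.natCast_apply]
    linarith

theorem linf_le_of_le_of_le_add {x y : Fin d → ℤ} {k : ℕ} (hyx : y ≤ x) (hxy : x ≤ y + k) :
    linf x y ≤ k :=
  linf_le_iff.2 fun i => abs_sub_le_iff.2
    ⟨by linarith [hxy i, show (y + k) i = y i + k from rfl],
      by linarith [hyx i, show (0 : ℤ) ≤ k from k.cast_nonneg]⟩

end Grid

/-- The sub-instance `f^x`. -/
def slice {d1 d2 : ℕ} (f : (Fin d1 → ℤ) × (Fin d2 → ℤ) → (Fin d1 → ℤ) × (Fin d2 → ℤ))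
    (x : Fin d1 → ℤ) (y : Fin d2 → ℤ) : Fin d2 → ℤ :=
  (f (x, y)).2

section Slice

variable {n d1 d2 : ℕ} {f : (Fin d1 → ℤ) × (Fin d2 → ℤ) → (Fin d1 → ℤ) × (Fin d2 → ℤ)}
  {x x' : Fin d1 → ℤ}

theorem slice_mapsTo (hrange : ∀ u, inGridP n u → inGridP n (f u)) (hx : inGrid n x) :
    Set.MapsTo (slice f x) {y | inGrid n y} {y | inGrid n y} :=
  fun y hy => (hrange (x, y) ⟨hx, hy⟩).2

theorem slice_le_slice
    (hmono : ∀ u v, inGridP n u → inGridP n v → u ≤ v → f u ≤ f v)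
    (hx : inGrid n x) (hx' : inGrid n x') (hxx' : x ≤ x') {y y' : Fin d2 → ℤ}
    (hy : inGrid n y) (hy' : inGrid n y') (hyy' : y ≤ y') : slice f x y ≤ slice f x' y' :=
  (hmono (x, y) (x', y') ⟨hx, hy⟩ ⟨hx', hy'⟩ ⟨hxx', hyy'⟩).2

theorem slice_monotoneOn (hmono : ∀ u v, inGridP n u → inGridP n v → u ≤ v → f u ≤ f v)
    (hx : inGrid n x) : MonotoneOn (slice f x) {y | inGrid n y} :=
  fun _ hy _ hy' => slice_le_slice hmono hx hx le_rfl hy hy'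

theorem linf_slice_le (hnonexp : ∀ u v, inGridP n u → inGridP n v → linfP (f u) (f v) ≤ linfP u v)
    (hx : inGrid n x) (hx' : inGrid n x') {y y' : Fin d2 → ℤ} (hy : inGrid n y)
    (hy' : inGrid n y') : linf (slice f x y) (slice f x' y') ≤ max (linf x x') (linf y y') :=
  (le_max_right _ _).trans (hnonexp (x, y) (x', y') ⟨hx, hy⟩ ⟨hx', hy'⟩)

theorem slice_lfp_le_of_map_le (hrange : ∀ u, inGridP n u → inGridP n (f u))
    (hmono : ∀ u v, inGridP n u → inGridP n v → u ≤ v → f u ≤ f v) (hx : inGrid n x)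
    {y w : Fin d2 → ℤ} (hleast : ∀ z, inGrid n z → slice f x z = z → y ≤ z)
    (hw : inGrid n w) (hgw : slice f x w ≤ w) : y ≤ w :=
  le_of_forall_isFixedPt_of_map_le setOf_inGrid_finite.wellFoundedOn (slice_mapsTo hrange hx)
    (slice_monotoneOn hmono hx) hleast hw hgw

end Slice

theorem subslice_lfp_monotone_general (d1 d2 n : ℕ)
    (f : (Fin d1 → ℤ) × (Fin d2 → ℤ) → (Fin d1 → ℤ) × (Fin d2 → ℤ))
    (hrange : ∀ u, inGridP n u → inGridP n (f u))
    (hmono : ∀ u v, inGridP n u → inGridP n v → u ≤ v → f u ≤ f v)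
    (hnonexp : ∀ u v, inGridP n u → inGridP n v → linfP (f u) (f v) ≤ linfP u v)
    (x xt : Fin d1 → ℤ) (hx : inGrid n x) (hxt : inGrid n xt)
    (hle : x ≤ xt)
    (ys yts : Fin d2 → ℤ)
    -- `ys` is the least fixed point of `f^x`
    (hysG : inGrid n ys) (hysfix : (f (x, ys)).2 = ys)
    (hysleast : ∀ z, inGrid n z → (f (x, z)).2 = z → ys ≤ z)
    -- `yts` is the least fixed point of `f^x̃`
    (hytsG : inGrid n yts) (hytsfix : (f (xt, yts)).2 = yts)
    (hytsleast : ∀ z, inGrid n z → (f (xt, z)).2 = z → yts ≤ z) :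
    ys ≤ yts ∧ linf yts ys ≤ linf xt x := by
  have hys_le : ys ≤ yts := slice_lfp_le_of_map_le hrange hmono hx hysleast hytsG <|
    (slice_le_slice hmono hx hxt hle hytsG hytsG le_rfl).trans_eq hytsfix
  set k := linf xt x
  set w := yts ⊓ (ys + k)
  have hys_le_w : ys ≤ w := le_inf hys_le (le_add_of_nonneg_right k.cast_nonneg)
  have hwG : inGrid n w := inGrid_of_le_of_le hysG hytsG hys_le_w inf_le_left
  have hw_pre : slice f xt w ≤ w := by
    refine le_inf ((slice_le_slice hmono hxt hxt le_rfl hwG hytsG inf_le_left).trans_eq hytsfix) ?_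
    refine le_add_of_linf_le ?_
    calc linf (slice f xt w) ys = linf (slice f xt w) (slice f x ys) :=
          congrArg _ hysfix.symm
      _ ≤ max k (linf w ys) := linf_slice_le hnonexp hxt hx hwG hysG
      _ ≤ k := max_le le_rfl (linf_le_of_le_of_le_add hys_le_w inf_le_right)
  have hyts_le : yts ≤ w := slice_lfp_le_of_map_le hrange hmono hxt hytsleast hwG hw_pre
  exact ⟨hys_le, linf_le_of_le_of_le_add hys_le (hyts_le.trans inf_le_right)⟩

/-- For `x ≤ x̃`, the least fixed points `y*` of `f^x` and `ỹ*` of `f^x̃`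
satisfy `y* ≤ ỹ*` and `‖ỹ* − y*‖∞ ≤ ‖x̃ − x‖∞`. -/
theorem subslice_lfp_monotone (d1 d2 n : ℕ) (hn : 1 ≤ n)
    (f : (Fin d1 → ℤ) × (Fin d2 → ℤ) → (Fin d1 → ℤ) × (Fin d2 → ℤ))
    (hrange : ∀ u, inGridP n u → inGridP n (f u))
    (hmono : ∀ u v, inGridP n u → inGridP n v → u ≤ v → f u ≤ f v)
    (hnonexp : ∀ u v, inGridP n u → inGridP n v → linfP (f u) (f v) ≤ linfP u v)
    (hunit : ∀ u, inGridP n u → linfP (f u) u ≤ 1)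
    (x xt : Fin d1 → ℤ) (hx : inGrid n x) (hxt : inGrid n xt)
    (hle : x ≤ xt)
    (ys yts : Fin d2 → ℤ)
    -- `ys` is the least fixed point of `f^x`
    (hysG : inGrid n ys) (hysfix : (f (x, ys)).2 = ys)
    (hysleast : ∀ z, inGrid n z → (f (x, z)).2 = z → ys ≤ z)
    -- `yts` is the least fixed point of `f^x̃`
    (hytsG : inGrid n yts) (hytsfix : (f (xt, yts)).2 = yts)
    (hytsleast : ∀ z, inGrid n z → (f (xt, z)).2 = z → yts ≤ z) :
    ys ≤ yts ∧ linf yts ys ≤ linf xt x :=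
  subslice_lfp_monotone_general d1 d2 n f hrange hmono hnonexp x xt hx hxt hle ys yts hysG hysfix
    hysleast hytsG hytsfix hytsleast
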